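/- arXiv:1312.5620 — 2 statements merged into one kernel-verified Lean document; each statement's English description precedes it below -/
import Mathlib

section
/- Let G be obtained from a 5-cycle with vertices u, v, x, y, z (uv an edge maximizing degree-sum on the cycle) by attaching at least 2 pendant edges at every cycle vertex, and suppose d(u) + d(v) < d(x) + d(y) + d(z) − 3. Let η = ⌈(d(x)+d(y)+d(z)−d(u)−d(v)−3)/2⌉. Then the strong chromatic index of G is at most d(u) + d(v) − 1 + η. -/
open SimpleGraph

/-- Two edges of `G` are within distance at most 2: they share a vertex, or some edge of `G`
joins an endpoint of one to an endpoint of the other. -/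
def EdgesNear {V : Type*} (G : SimpleGraph V) (e f : Sym2 V) : Prop :=
  (∃ x, x ∈ e ∧ x ∈ f) ∨ (∃ x y, x ∈ e ∧ y ∈ f ∧ G.Adj x y)

/-- `c` assigns distinct colours to any two distinct edges of `G` at distance at most 2. -/
def IsStrongEdgeColoringOn {V : Type*} (G : SimpleGraph V) (c : Sym2 V → ℕ) : Prop :=
  ∀ e ∈ G.edgeSet, ∀ f ∈ G.edgeSet, e ≠ f → EdgesNear G e f → c e ≠ c f

/-- A strong edge-colouring of `G` with `k` colours. -/
def IsStrongEdgeColoring {V : Type*} (G : SimpleGraph V) (k : ℕ) (c : Sym2 V → ℕ) : Prop :=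
  (∀ e ∈ G.edgeSet, c e < k) ∧ IsStrongEdgeColoringOn G c

/-- The strong chromatic index of `G`. -/
noncomputable def sci {V : Type*} (G : SimpleGraph V) : ℕ :=
  sInf {k | ∃ c : Sym2 V → ℕ, IsStrongEdgeColoring G k c}

/-- Degree of a vertex (cardinality of its neighbour set). -/
noncomputable def sdeg {V : Type*} (G : SimpleGraph V) (v : V) : ℕ :=
  (G.neighborSet v).ncard

/-- The graph obtained from the cycle `C_n` (on vertices `Sum.inl i`, `i : Fin n`)
by attaching `p i` pendant edges at the cycle vertex `i` (the pendant neighbours of `i`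
are the vertices `Sum.inr ⟨i, x⟩`). -/
def pufferGraph (n : ℕ) (p : Fin n → ℕ) :
    SimpleGraph (Fin n ⊕ Σ i : Fin n, Fin (p i)) :=
  SimpleGraph.fromRel (fun a b =>
    (∃ i j : Fin n, a = Sum.inl i ∧ b = Sum.inl j ∧ (SimpleGraph.cycleGraph n).Adj i j) ∨
    (∃ (i : Fin n) (x : Fin (p i)), a = Sum.inl i ∧ b = Sum.inr ⟨i, x⟩))

open Classical in
/-- The maximum of `d(u) + d(v)` over the edges `uv` of the cycle of `pufferGraph n p`. -/
noncomputable def maxCycleDegSum (n : ℕ) (p : Fin n → ℕ) : ℕ :=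
  Finset.univ.sup fun q : Fin n × Fin n =>
    if (SimpleGraph.cycleGraph n).Adj q.1 q.2 then
      sdeg (pufferGraph n p) (Sum.inl q.1) + sdeg (pufferGraph n p) (Sum.inl q.2)
    else 0

/-!
Give the five cycle edges five distinct colours. A pendant edge at `j` is at distance 3 from the
cycle edge opposite `j`, so one pendant edge at `j` may reuse that colour. All other pendant
colours come in five blocks, block `m` being shared by the pendant edges at the non-adjacent
vertices `m` and `m + 2`, so that `j` draws from the blocks `j` and `j + 3`. Writing
`w j = d(j) - 3` (one more at `u` if needed to make `∑ w` even), the block sizes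
`z m = (∑ w) / 2 - w (m + 3) - w (m + 4)` satisfy `z j + z (j + 3) = w j`; they are nonnegative
because `uv` is a heaviest cycle edge and `d(u) + d(v) < d(x) + d(y) + d(z) - 3`. The palette then
has `(∑ w) / 2 + 5` colours, which is the bound.
-/

lemma sci_le_of_isStrongEdgeColoring {V : Type*} {G : SimpleGraph V} {k : ℕ} {c : Sym2 V → ℕ}
    (h : IsStrongEdgeColoring G k c) : sci G ≤ k :=
  Nat.sInf_le ⟨c, h⟩

lemma EdgesNear.symm {V : Type*} {G : SimpleGraph V} {e f : Sym2 V} (h : EdgesNear G e f) :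
    EdgesNear G f e := by
  obtain ⟨x, hxe, hxf⟩ | ⟨x, y, hx, hy, hxy⟩ := h
  · exact .inl ⟨x, hxf, hxe⟩
  · exact .inr ⟨y, x, hy, hx, hxy.symm⟩

lemma edgesNear_mk_iff {V : Type*} {G : SimpleGraph V} {a b c d : V} :
    EdgesNear G s(a, b) s(c, d) ↔
      (a = c ∨ a = d ∨ b = c ∨ b = d) ∨ (G.Adj a c ∨ G.Adj a d ∨ G.Adj b c ∨ G.Adj b d) := by
  simp only [EdgesNear, Sym2.mem_iff]
  aesop

section Puffer

variable {n : ℕ} {p : Fin n → ℕ}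

@[simp]
lemma pufferGraph_adj_inl_inl {i j : Fin n} :
    (pufferGraph n p).Adj (.inl i) (.inl j) ↔ (cycleGraph n).Adj i j := by
  simp only [pufferGraph, fromRel_adj, ne_eq, Sum.inl.injEq, reduceCtorEq, exists_false, or_false,
    exists_and_left, exists_eq_left', (cycleGraph n).adj_comm j i, or_self]
  exact and_iff_right_of_imp fun h => h.ne

@[simp]
lemma pufferGraph_adj_inl_inr {i j : Fin n} {x : Fin (p j)} :
    (pufferGraph n p).Adj (.inl i) (.inr ⟨j, x⟩) ↔ i = j := by
  simp only [pufferGraph, exists_and_left, fromRel_adj, ne_eq, reduceCtorEq, not_false_eq_true,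
    Sum.inl.injEq, false_and, exists_false, and_false, Sum.inr.injEq, Sigma.mk.injEq,
    exists_eq_left', false_or, and_self, or_self, or_false, true_and]
  exact ⟨fun h => h.1.symm, by rintro rfl; exact ⟨rfl, x, .rfl⟩⟩

@[simp]
lemma pufferGraph_adj_inr_inl {i j : Fin n} {x : Fin (p j)} :
    (pufferGraph n p).Adj (.inr ⟨j, x⟩) (.inl i) ↔ i = j := by
  rw [adj_comm, pufferGraph_adj_inl_inr]

@[simp]
lemma pufferGraph_not_adj_inr_inr {s t : Σ i, Fin (p i)} :
    ¬ (pufferGraph n p).Adj (.inr s) (.inr t) := by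
  simp [pufferGraph, fromRel_adj]

lemma pufferGraph_neighborSet_inl (i : Fin n) :
    (pufferGraph n p).neighborSet (.inl i) =
      .inl '' (cycleGraph n).neighborSet i ∪ .range fun x : Fin (p i) => .inr ⟨i, x⟩ := by
  ext (j | ⟨j, x⟩) <;>
    simp only [mem_neighborSet, pufferGraph_adj_inl_inl, pufferGraph_adj_inl_inr] <;> aesop

lemma sdeg_pufferGraph_inl {p : Fin (n + 3) → ℕ} (i : Fin (n + 3)) :
    sdeg (pufferGraph (n + 3) p) (.inl i) = p i + 2 := by
  have hcycle : ((cycleGraph (n + 3)).neighborSet i).ncard = 2 := by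
    rw [← Nat.card_coe_set_eq, Nat.card_eq_fintype_card, card_neighborSet_eq_degree,
      cycleGraph_degree_three_le]
  rw [sdeg, pufferGraph_neighborSet_inl, Set.ncard_union_eq,
    Set.ncard_image_of_injective _ Sum.inl_injective, hcycle, Set.ncard_range_of_injective,
    Nat.card_eq_fintype_card, Fintype.card_fin, add_comm]
  · intro x y h
    simpa using h
  · rw [Set.disjoint_left]
    rintro _ ⟨j, -, rfl⟩ ⟨x, hx⟩
    simp at hx

lemma pufferGraph_edge_cases {e : Sym2 (Fin n ⊕ (Σ i, Fin (p i)))}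
    (he : e ∈ (pufferGraph n p).edgeSet) :
    (∃ a b, (cycleGraph n).Adj a b ∧ e = s(.inl a, .inl b)) ∨
      ∃ (j : Fin n) (x : Fin (p j)), e = s(.inl j, .inr ⟨j, x⟩) := by
  induction e using Sym2.ind with
  | _ u v =>
  rw [mem_edgeSet] at he
  rcases u with a | ⟨j, x⟩ <;> rcases v with b | ⟨k, y⟩
  · exact .inl ⟨a, b, pufferGraph_adj_inl_inl.mp he, rfl⟩
  · obtain rfl := pufferGraph_adj_inl_inr.mp he
    exact .inr ⟨a, y, rfl⟩
  · obtain rfl := pufferGraph_adj_inr_inl.mp he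
    exact .inr ⟨b, x, Sym2.eq_swap⟩
  · exact absurd he pufferGraph_not_adj_inr_inr

lemma pufferGraph_edgesNear_pendant_pendant {j k : Fin n} {x : Fin (p j)} {y : Fin (p k)}
    (h : EdgesNear (pufferGraph n p) s(.inl j, .inr ⟨j, x⟩) s(.inl k, .inr ⟨k, y⟩)) :
    j = k ∨ (cycleGraph n).Adj j k := by
  simp only [edgesNear_mk_iff, Sum.inl.injEq, reduceCtorEq, Sum.inr.injEq, Sigma.mk.injEq,
    pufferGraph_adj_inl_inl, pufferGraph_adj_inl_inr, pufferGraph_adj_inr_inl,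
    pufferGraph_not_adj_inr_inr] at h
  tauto

lemma pufferGraph_edgesNear_pendant_cycle {j a b : Fin n} {x : Fin (p j)}
    (h : EdgesNear (pufferGraph n p) s(.inl j, .inr ⟨j, x⟩) s(.inl a, .inl b)) :
    j = a ∨ j = b ∨ (cycleGraph n).Adj j a ∨ (cycleGraph n).Adj j b := by
  simp only [edgesNear_mk_iff, Sum.inl.injEq, reduceCtorEq, pufferGraph_adj_inl_inl,
    pufferGraph_adj_inr_inl] at h
  tauto

/-- Pendant vertices are never adjacent, so the last clause is arbitrary (but symmetric). -/
def pufferEdgeColour (cc : Sym2 (Fin n) → ℕ) (pc : ∀ i, Fin (p i) → ℕ) :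
    Fin n ⊕ (Σ i, Fin (p i)) → Fin n ⊕ (Σ i, Fin (p i)) → ℕ
  | .inl a, .inl b => cc s(a, b)
  | .inl _, .inr ⟨j, x⟩ => pc j x
  | .inr ⟨j, x⟩, .inl _ => pc j x
  | .inr ⟨j, _⟩, .inr ⟨k, _⟩ => cc s(j, k)

def pufferEdgeColouring (cc : Sym2 (Fin n) → ℕ) (pc : ∀ i, Fin (p i) → ℕ) :
    Sym2 (Fin n ⊕ (Σ i, Fin (p i))) → ℕ :=
  Sym2.lift ⟨pufferEdgeColour cc pc, by
    rintro (a | ⟨j, x⟩) (b | ⟨k, y⟩) <;> simp only [pufferEdgeColour, Sym2.eq_swap]⟩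

@[simp]
lemma pufferEdgeColouring_inl_inl (cc : Sym2 (Fin n) → ℕ) (pc : ∀ i, Fin (p i) → ℕ)
    (a b : Fin n) : pufferEdgeColouring cc pc s(.inl a, .inl b) = cc s(a, b) :=
  rfl

@[simp]
lemma pufferEdgeColouring_inl_inr (cc : Sym2 (Fin n) → ℕ) (pc : ∀ i, Fin (p i) → ℕ)
    (a j : Fin n) (x : Fin (p j)) : pufferEdgeColouring cc pc s(.inl a, .inr ⟨j, x⟩) = pc j x :=
  rfl

theorem isStrongEdgeColoringOn_pufferEdgeColouring {cc : Sym2 (Fin n) → ℕ}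
    {pc : ∀ i, Fin (p i) → ℕ} (hcc : Set.InjOn cc (cycleGraph n).edgeSet)
    (hpc : ∀ j, Function.Injective (pc j))
    (hpc_adj : ∀ j k x y, (cycleGraph n).Adj j k → pc j x ≠ pc k y)
    (hpc_cc : ∀ j x a b, (cycleGraph n).Adj a b →
      (j = a ∨ j = b ∨ (cycleGraph n).Adj j a ∨ (cycleGraph n).Adj j b) → pc j x ≠ cc s(a, b)) :
    IsStrongEdgeColoringOn (pufferGraph n p) (pufferEdgeColouring cc pc) := by
  intro e he f hf hne hnear
  rcases pufferGraph_edge_cases he with ⟨a, b, hab, rfl⟩ | ⟨j, x, rfl⟩ <;>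
    rcases pufferGraph_edge_cases hf with ⟨c, d, hcd, rfl⟩ | ⟨k, y, rfl⟩
  · rw [pufferEdgeColouring_inl_inl, pufferEdgeColouring_inl_inl]
    exact hcc.ne hab hcd fun h => hne (by rw [Sym2.eq_iff] at h ⊢; simpa using h)
  · exact (hpc_cc k y a b hab (pufferGraph_edgesNear_pendant_cycle hnear.symm)).symm
  · exact hpc_cc j x c d hcd (pufferGraph_edgesNear_pendant_cycle hnear)
  · rw [pufferEdgeColouring_inl_inr, pufferEdgeColouring_inl_inr]
    obtain rfl | hjk := pufferGraph_edgesNear_pendant_pendant hnear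
    · exact (hpc j).ne fun h => hne (by rw [h])
    · exact hpc_adj j k x y hjk

end Puffer

/-- `c5Opposite s(i, i + 1) = i + 3`, the vertex of `C₅` opposite to the edge `s(i, i + 1)`. -/
def c5Opposite : Sym2 (Fin 5) → Fin 5 :=
  Sym2.lift ⟨fun a b => 3 * (a + b), fun a b => congrArg (3 * ·) (add_comm a b)⟩

lemma c5Opposite_injOn : Set.InjOn c5Opposite (cycleGraph 5).edgeSet := by
  have key : ∀ a b c d : Fin 5, (cycleGraph 5).Adj a b → (cycleGraph 5).Adj c d →
      3 * (a + b) = 3 * (c + d) → s(a, b) = s(c, d) := by decide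
  intro e he f hf
  induction e using Sym2.ind
  induction f using Sym2.ind
  exact key _ _ _ _ he hf

lemma c5Opposite_ne_of_near {j a b : Fin 5} (hab : (cycleGraph 5).Adj a b)
    (hj : j = a ∨ j = b ∨ (cycleGraph 5).Adj j a ∨ (cycleGraph 5).Adj j b) :
    j ≠ c5Opposite s(a, b) := by
  revert j a b
  decide

def paletteCode {m k : ℕ} (z : Fin m → ℕ) (c : (Σ i, Fin (z i)) ⊕ Fin k) : ℕ :=
  finSumFinEquiv (c.map finSigmaFinEquiv id)

lemma paletteCode_injective {m k : ℕ} (z : Fin m → ℕ) :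
    Function.Injective (paletteCode (k := k) z) :=
  Fin.val_injective.comp <| finSumFinEquiv.injective.comp <|
    Sum.map_injective.mpr ⟨finSigmaFinEquiv.injective, Function.injective_id⟩

lemma paletteCode_lt {m k : ℕ} (z : Fin m → ℕ) (c : (Σ i, Fin (z i)) ⊕ Fin k) :
    paletteCode z c < ∑ i, z i + k :=
  Fin.is_lt _

/-- `.inr j` stands for the colour of the cycle edge opposite `j`. -/
def pendantColour (z : Fin 5 → ℕ) (j : Fin 5) (x : ℕ) : (Σ m, Fin (z m)) ⊕ Fin 5 :=
  if h : x < z j then .inl ⟨j, x, h⟩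
  else if h' : x - z j < z (j + 3) then .inl ⟨j + 3, x - z j, h'⟩
  else .inr j

lemma pendantColour_injOn (z : Fin 5 → ℕ) (j : Fin 5) :
    Set.InjOn (pendantColour z j) (Set.Iic (z j + z (j + 3))) := by
  intro x hx y hy h
  rw [Set.mem_Iic] at hx hy
  unfold pendantColour at h
  split_ifs at h <;>
    simp_all only [left_eq_add, add_eq_left, Fin.reduceEq, not_lt, Sum.inl.injEq, Sigma.mk.injEq,
      heq_eq_eq, Fin.mk.injEq, true_and, false_and] <;> omega

lemma pendantColour_cases (z : Fin 5 → ℕ) (j : Fin 5) (x : ℕ) :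
    (∃ c : Σ m, Fin (z m), pendantColour z j x = .inl c ∧ (c.1 = j ∨ c.1 = j + 3)) ∨
      pendantColour z j x = .inr j := by
  unfold pendantColour
  split_ifs <;> simp

lemma pendantColour_ne_of_adj {z : Fin 5 → ℕ} {j k : Fin 5} (hjk : (cycleGraph 5).Adj j k)
    (x y : ℕ) : pendantColour z j x ≠ pendantColour z k y := by
  have hblocks : ∀ m, (m = j ∨ m = j + 3) → ¬ (m = k ∨ m = k + 3) := by
    revert j k
    decide
  rcases pendantColour_cases z j x with ⟨c, hc, hcj⟩ | hc <;>
    rcases pendantColour_cases z k y with ⟨d, hd, hdk⟩ | hd <;> rw [hc, hd]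
  · rintro ⟨⟩
    exact hblocks _ hcj hdk
  · simp
  · simp
  · simpa using hjk.ne

def c5Colouring (p z : Fin 5 → ℕ) : Sym2 (Fin 5 ⊕ (Σ i, Fin (p i))) → ℕ :=
  pufferEdgeColouring (fun e => paletteCode z (.inr (c5Opposite e)))
    (fun j x => paletteCode z (pendantColour z j x))

theorem isStrongEdgeColoring_c5Colouring {p z : Fin 5 → ℕ}
    (hz : ∀ j, p j ≤ z j + z (j + 3) + 1) :
    IsStrongEdgeColoring (pufferGraph 5 p) (∑ j, z j + 5) (c5Colouring p z) := by
  refine ⟨fun e he => ?_, isStrongEdgeColoringOn_pufferEdgeColouring ?_ ?_ ?_ ?_⟩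
  · rcases pufferGraph_edge_cases he with ⟨a, b, -, rfl⟩ | ⟨j, x, rfl⟩ <;>
      exact paletteCode_lt _ _
  · exact (paletteCode_injective z).comp_injOn (Sum.inr_injective.comp_injOn c5Opposite_injOn)
  · intro j x y h
    have hxy : x.val ≤ z j + z (j + 3) ∧ y.val ≤ z j + z (j + 3) := by
      have := hz j
      omega
    exact Fin.ext <| pendantColour_injOn z j hxy.1 hxy.2 (paletteCode_injective z h)
  · intro j k x y hjk
    exact (paletteCode_injective z).ne (pendantColour_ne_of_adj hjk x y)
  · intro j x a b hab hnear
    refine (paletteCode_injective z).ne ?_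
    rcases pendantColour_cases z j x with ⟨c, hc, -⟩ | hc <;> rw [hc]
    · simp
    · simpa using c5Opposite_ne_of_near hab hnear

lemma exists_blockSizes (p : Fin 5 → ℕ)
    (hpair : ∀ i, p i + p (i + 1) ≤ p 0 + p 1) (hm : p 0 + p 1 + 2 ≤ p 2 + p 3 + p 4) :
    ∃ z : Fin 5 → ℕ, (∀ j, p j ≤ z j + z (j + 3) + 1) ∧ ∑ j, z j + 5 ≤ (∑ j, p j) / 2 + 3 := by
  have : p 1 + p 2 ≤ p 0 + p 1 := hpair 1
  have : p 2 + p 3 ≤ p 0 + p 1 := hpair 2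
  have : p 3 + p 4 ≤ p 0 + p 1 := hpair 3
  have : p 4 + p 0 ≤ p 0 + p 1 := hpair 4
  set w : Fin 5 → ℕ := fun j => p j - 1 + if j = 0 then (∑ i, p i + 1) % 2 else 0 with hw
  refine ⟨fun m => (∑ i, w i) / 2 - (w (m + 3) + w (m + 4)), fun j => ?_, ?_⟩
  · fin_cases j <;>
      simp only [hw, Fin.sum_univ_five, Fin.reduceFinMk, Fin.mk_one, Fin.zero_eta, Fin.isValue,
        Fin.reduceAdd, Fin.reduceEq, ↓reduceIte, add_zero, zero_add] <;> omega
  · simp only [hw, Fin.sum_univ_five, Fin.isValue, Fin.reduceAdd, Fin.reduceEq, ↓reduceIte,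
      add_zero, zero_add]
    omega

theorem sci_C5_heavy_pendants_le_general (p : Fin 5 → ℕ)
    (hmax : ∀ i : Fin 5,
      sdeg (pufferGraph 5 p) (Sum.inl i) + sdeg (pufferGraph 5 p) (Sum.inl (i + 1)) ≤
        sdeg (pufferGraph 5 p) (Sum.inl 0) + sdeg (pufferGraph 5 p) (Sum.inl 1))
    (h : sdeg (pufferGraph 5 p) (Sum.inl 0) + sdeg (pufferGraph 5 p) (Sum.inl 1) <
        sdeg (pufferGraph 5 p) (Sum.inl 2) + sdeg (pufferGraph 5 p) (Sum.inl 3) +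
          sdeg (pufferGraph 5 p) (Sum.inl 4) - 3) :
    sci (pufferGraph 5 p) ≤
      sdeg (pufferGraph 5 p) (Sum.inl 0) + sdeg (pufferGraph 5 p) (Sum.inl 1) - 1 +
        (sdeg (pufferGraph 5 p) (Sum.inl 2) + sdeg (pufferGraph 5 p) (Sum.inl 3) +
          sdeg (pufferGraph 5 p) (Sum.inl 4) -
          sdeg (pufferGraph 5 p) (Sum.inl 0) - sdeg (pufferGraph 5 p) (Sum.inl 1) - 3 + 1) / 2 := by
  simp only [sdeg_pufferGraph_inl] at hmax h ⊢
  obtain ⟨z, hz, hsum⟩ := exists_blockSizes p (fun i => by have := hmax i; omega) (by omega)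
  have hsci := sci_le_of_isStrongEdgeColoring (isStrongEdgeColoring_c5Colouring hz)
  simp only [Fin.sum_univ_five] at hsum hsci
  omega

/-- Consider a 5-cycle with vertices `u, v, x, y, z` in cyclic order (here the cycle vertices
`0, 1, 2, 3, 4` of `pufferGraph 5 p`), with at least 2 pendant edges at every cycle vertex and
with the edge `uv` maximizing the degree sum over edges of the cycle. If
`d(u) + d(v) < d(x) + d(y) + d(z) - 3`, and `η = ⌈(d(x)+d(y)+d(z)-d(u)-d(v)-3)/2⌉`, then the
strong chromatic index is at most `d(u) + d(v) - 1 + η`. -/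
theorem sci_C5_heavy_pendants_le (p : Fin 5 → ℕ) (hp : ∀ i, 2 ≤ p i)
    (hmax : ∀ i : Fin 5,
      sdeg (pufferGraph 5 p) (Sum.inl i) + sdeg (pufferGraph 5 p) (Sum.inl (i + 1)) ≤
        sdeg (pufferGraph 5 p) (Sum.inl 0) + sdeg (pufferGraph 5 p) (Sum.inl 1))
    (h : sdeg (pufferGraph 5 p) (Sum.inl 0) + sdeg (pufferGraph 5 p) (Sum.inl 1) <
        sdeg (pufferGraph 5 p) (Sum.inl 2) + sdeg (pufferGraph 5 p) (Sum.inl 3) +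
          sdeg (pufferGraph 5 p) (Sum.inl 4) - 3) :
    sci (pufferGraph 5 p) ≤
      sdeg (pufferGraph 5 p) (Sum.inl 0) + sdeg (pufferGraph 5 p) (Sum.inl 1) - 1 +
        (sdeg (pufferGraph 5 p) (Sum.inl 2) + sdeg (pufferGraph 5 p) (Sum.inl 3) +
          sdeg (pufferGraph 5 p) (Sum.inl 4) -
          sdeg (pufferGraph 5 p) (Sum.inl 0) - sdeg (pufferGraph 5 p) (Sum.inl 1) - 3 + 1) / 2 :=
  sci_C5_heavy_pendants_le_general p hmax h
end

section
/- Let G ≠ C_{2k} be obtained from an even cycle C_{2k} with 2k ≥ 6 and 2k ≡ 1 (mod 3) by attaching pendant edges at cycle vertices, such that every cycle vertex has degree at most 3. Then the strong chromatic index of G is at most max over edges uv of the cycle of (d(u) + d(v)), i.e. at most 6. -/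
open SimpleGraph

/-!
Degree at most 3 leaves at most one pendant edge per cycle vertex. Colour the cycle edge
`{a, a + 1}` by `a mod 3`, except the last one, which gets colour `3`; since `n ≡ 1 (mod 3)`,
this is the only break in the pattern `0, 1, 2, 0, 1, 2, …`, and any two cycle edges at distance
at most 2 (indices differing by 1 or 2 around the cycle) get different colours. Two pendant edges
are at distance at most 2 only if their cycle vertices are adjacent. If no two adjacent cycle
vertices carry pendants, all pendant edges get colour `4`, and the bound is at least `5` because
some pendant exists. Otherwise the bound is at least `6`, and the pendant edge at vertex `i` gets
colour `4 + i mod 2`, which separates adjacent vertices because the cycle is even.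
-/

open Sum

section StrongColouring

variable {V : Type*} {G : SimpleGraph V}

lemma edgesNear_iff {e f : Sym2 V} :
    EdgesNear G e f ↔ ∃ x ∈ e, ∃ y ∈ f, x = y ∨ G.Adj x y := by
  unfold EdgesNear
  constructor
  · rintro (⟨x, hxe, hxf⟩ | ⟨x, y, hx, hy, hxy⟩)
    exacts [⟨x, hxe, x, hxf, Or.inl rfl⟩, ⟨x, hx, y, hy, Or.inr hxy⟩]
  · rintro ⟨x, hx, y, hy, rfl | hxy⟩
    exacts [Or.inl ⟨x, hx, hy⟩, Or.inr ⟨x, y, hx, hy, hxy⟩]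

lemma sci_le_of_edgeSet_subset_range {ι : Type*} [Nonempty ι] {m : ℕ} (E : ι → Sym2 V)
    (κ : ι → ℕ) (hcover : G.edgeSet ⊆ Set.range E) (hlt : ∀ x, κ x < m)
    (hstrong : ∀ x y, E x ≠ E y → EdgesNear G (E x) (E y) → κ x ≠ κ y) :
    sci G ≤ m := by
  refine Nat.sInf_le ⟨κ ∘ Function.invFun E, fun e _ => hlt _, ?_⟩
  intro e he f hf hef hnear
  have hE : ∀ e ∈ G.edgeSet, E (Function.invFun E e) = e :=
    fun e he => Function.invFun_eq (hcover he)
  rw [← hE e he, ← hE f hf] at hef hnear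
  exact hstrong _ _ hef hnear

end StrongColouring

namespace SimpleGraph

variable {n : ℕ} [NeZero n]

open Fin.CommRing in
lemma cycleGraph_adj_iff_eq_add_one (hn : 2 ≤ n) {u v : Fin n} :
    (cycleGraph n).Adj u v ↔ v = u + 1 ∨ u = v + 1 := by
  obtain ⟨m, rfl⟩ : ∃ m, n = m + 2 := ⟨n - 2, by omega⟩
  rw [cycleGraph_adj, sub_eq_iff_eq_add, sub_eq_iff_eq_add, add_comm 1, add_comm 1, or_comm]

lemma cycleGraph_adj_add_one (hn : 2 ≤ n) (u : Fin n) : (cycleGraph n).Adj u (u + 1) :=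
  (cycleGraph_adj_iff_eq_add_one hn).2 (.inl rfl)

end SimpleGraph

namespace pufferGraph

variable {n : ℕ} {p : Fin n → ℕ}

@[simp] lemma adj_inl_inl {i j : Fin n} :
    (pufferGraph n p).Adj (inl i) (inl j) ↔ (cycleGraph n).Adj i j := by
  constructor
  · rintro ⟨-, h | h⟩ <;> aesop (add safe Adj.symm)
  · intro h
    exact ⟨by simpa using h.ne, .inl (.inl ⟨_, _, rfl, rfl, h⟩)⟩

@[simp] lemma adj_inl_inr {i : Fin n} {s : Σ i : Fin n, Fin (p i)} :
    (pufferGraph n p).Adj (inl i) (inr s) ↔ s.1 = i := by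
  rcases s with ⟨j, x⟩
  constructor
  · rintro ⟨-, h | h⟩ <;> aesop
  · rintro rfl
    exact ⟨by simp, .inl (.inr ⟨_, _, rfl, rfl⟩)⟩

@[simp] lemma adj_inr_inl {i : Fin n} {s : Σ i : Fin n, Fin (p i)} :
    (pufferGraph n p).Adj (inr s) (inl i) ↔ s.1 = i := by
  rw [adj_comm, adj_inl_inr]

@[simp] lemma not_adj_inr_inr {s t : Σ i : Fin n, Fin (p i)} :
    ¬ (pufferGraph n p).Adj (inr s) (inr t) := by
  simp [pufferGraph]

lemma neighborSet_inl (i : Fin n) :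
    (pufferGraph n p).neighborSet (inl i) =
      inl '' (cycleGraph n).neighborSet i ∪ Set.range fun x : Fin (p i) => inr ⟨i, x⟩ := by
  ext (j | ⟨j, x⟩)
  · simp
  · simp only [mem_neighborSet, adj_inl_inr, Set.mem_union, Set.mem_image, reduceCtorEq,
      and_false, exists_false, Set.mem_range, inr.injEq, Sigma.mk.injEq, false_or]
    constructor
    · rintro rfl
      exact ⟨x, rfl, .rfl⟩
    · rintro ⟨y, rfl, -⟩
      rfl

lemma sdeg_inl (hn : 3 ≤ n) (i : Fin n) : sdeg (pufferGraph n p) (inl i) = 2 + p i := by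
  obtain ⟨m, rfl⟩ : ∃ m, n = m + 3 := ⟨n - 3, by omega⟩
  have hpendant : Function.Injective fun x : Fin (p i) =>
      (inr ⟨i, x⟩ : Fin (m + 3) ⊕ Σ j, Fin (p j)) :=
    fun x y h => by simpa using h
  rw [sdeg, neighborSet_inl, Set.ncard_union_eq (by simp [Set.disjoint_left]),
    Set.ncard_image_of_injective _ inl_injective, Set.ncard_range_of_injective hpendant,
    ← cycleGraph_degree_three_le (v := i), ← card_neighborSet_eq_degree,
    ← Nat.card_coe_set_eq, Nat.card_eq_fintype_card, Nat.card_eq_fintype_card, Fintype.card_fin]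

lemma sdeg_add_sdeg_le_maxCycleDegSum {i j : Fin n} (h : (cycleGraph n).Adj i j) :
    sdeg (pufferGraph n p) (inl i) + sdeg (pufferGraph n p) (inl j) ≤ maxCycleDegSum n p := by
  unfold maxCycleDegSum
  refine le_trans ?_ (Finset.le_sup (Finset.mem_univ (i, j)))
  rw [if_pos h]

variable [NeZero n]

def edge (n : ℕ) [NeZero n] (p : Fin n → ℕ) :
    Fin n ⊕ (Σ i : Fin n, Fin (p i)) → Sym2 (Fin n ⊕ Σ i : Fin n, Fin (p i))
  | inl a => s(inl a, inl (a + 1))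
  | inr s => s(inl s.1, inr s)

lemma edgeSet_subset_range_edge (hn : 2 ≤ n) :
    (pufferGraph n p).edgeSet ⊆ Set.range (edge n p) := by
  rintro ⟨x, y⟩ hxy
  rw [mem_edgeSet] at hxy
  rcases x with i | s <;> rcases y with j | t
  · rcases (cycleGraph_adj_iff_eq_add_one hn).1 (adj_inl_inl.1 hxy) with rfl | rfl
    exacts [⟨inl i, rfl⟩, ⟨inl j, Sym2.eq_swap⟩]
  · obtain rfl := adj_inl_inr.1 hxy
    exact ⟨inr t, rfl⟩
  · obtain rfl := adj_inr_inl.1 hxy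
    exact ⟨inr s, Sym2.eq_swap⟩
  · exact (not_adj_inr_inr hxy).elim

open Fin.CommRing in
lemma edgesNear_edge_inl (hn : 2 ≤ n) {a b : Fin n}
    (h : EdgesNear (pufferGraph n p) (edge n p (inl a)) (edge n p (inl b))) :
    b = a ∨ b = a + 1 ∨ b = a + 2 ∨ a = b + 1 ∨ a = b + 2 := by
  obtain ⟨x, hx, y, hy, hxy⟩ := edgesNear_iff.1 h
  simp only [edge, Sym2.mem_iff] at hx hy
  rcases hx with rfl | rfl <;> rcases hy with rfl | rfl <;>
    simp only [inl.injEq, adj_inl_inl, cycleGraph_adj_iff_eq_add_one hn] at hxy <;>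
    grind

lemma edgesNear_edge_inr {s t : Σ i : Fin n, Fin (p i)}
    (h : EdgesNear (pufferGraph n p) (edge n p (inr s)) (edge n p (inr t))) :
    s.1 = t.1 ∨ (cycleGraph n).Adj s.1 t.1 := by
  obtain ⟨x, hx, y, hy, hxy⟩ := edgesNear_iff.1 h
  simp only [edge, Sym2.mem_iff] at hx hy
  rcases hx with rfl | rfl <;> rcases hy with rfl | rfl <;> simp_all [eq_comm]

end pufferGraph

def cycleColour (n : ℕ) (a : Fin n) : ℕ := if a.val + 1 = n then 3 else a.val % 3

lemma cycleColour_le_three {n : ℕ} (a : Fin n) : cycleColour n a ≤ 3 := by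
  unfold cycleColour; split_ifs <;> omega

section

variable {n : ℕ} [NeZero n]

lemma cycleColour_ne (h3 : n % 3 = 1) (hn : 2 ≤ n) {a b : Fin n} (h : b = a + 1 ∨ b = a + 2) :
    cycleColour n a ≠ cycleColour n b := by
  have := a.isLt
  have h1 : 1 % n = 1 := Nat.mod_eq_of_lt (by omega)
  have h2 : 2 % n = 2 := Nat.mod_eq_of_lt (by omega)
  rcases h with rfl | rfl <;>
    simp only [cycleColour, Fin.val_add_eq_ite, Fin.coe_ofNat_eq_mod, h1, h2] <;>
    split_ifs <;> omega

lemma Fin.val_add_one_mod_two_ne (h2 : n % 2 = 0) (a : Fin n) : (a + 1).val % 2 ≠ a.val % 2 := by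
  have := a.isLt
  have h1 : 1 % n = 1 := Nat.mod_eq_of_lt (by have := NeZero.ne n; omega)
  simp only [Fin.val_add_eq_ite, Fin.val_one', h1]
  split_ifs <;> omega

end

namespace pufferGraph

variable {n : ℕ} {p : Fin n → ℕ}

def colour (n : ℕ) (p : Fin n → ℕ) (m : ℕ) : Fin n ⊕ (Σ i : Fin n, Fin (p i)) → ℕ
  | inl a => cycleColour n a
  | inr s => if 6 ≤ m then 4 + s.1.val % 2 else 4

lemma colour_lt {m : ℕ} (hm : 5 ≤ m) (x : Fin n ⊕ Σ i : Fin n, Fin (p i)) :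
    colour n p m x < m := by
  rcases x with a | s
  · exact (cycleColour_le_three a).trans_lt (by omega)
  · simp only [colour]; split_ifs <;> omega

lemma colour_inl_ne_colour_inr {m : ℕ} (a : Fin n) (s : Σ i : Fin n, Fin (p i)) :
    colour n p m (inl a) ≠ colour n p m (inr s) := by
  have := cycleColour_le_three a
  simp only [colour]; split_ifs <;> omega

variable [NeZero n]

lemma colour_inr_ne_of_eq_add_one (h2 : n % 2 = 0) {m : ℕ} (hm : 6 ≤ m)
    {s t : Σ i : Fin n, Fin (p i)} (h : t.1 = s.1 + 1) :
    colour n p m (inr s) ≠ colour n p m (inr t) := by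
  have := Fin.val_add_one_mod_two_ne h2 s.1
  simp only [colour, if_pos hm, h]
  omega

lemma colour_ne (h3 : n % 3 = 1) (h2 : n % 2 = 0) (hp : ∀ i, p i ≤ 1) {m : ℕ}
    (hm : ∀ i, 0 < p i → 0 < p (i + 1) → 6 ≤ m) {x y : Fin n ⊕ Σ i : Fin n, Fin (p i)}
    (hxy : edge n p x ≠ edge n p y)
    (hnear : EdgesNear (pufferGraph n p) (edge n p x) (edge n p y)) :
    colour n p m x ≠ colour n p m y := by
  have hn : 2 ≤ n := by have := NeZero.ne n; omega
  rcases x with a | s <;> rcases y with b | t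
  · rcases edgesNear_edge_inl hn hnear with rfl | h | h | h | h
    · exact absurd rfl hxy
    exacts [cycleColour_ne h3 hn (.inl h), cycleColour_ne h3 hn (.inr h),
      (cycleColour_ne h3 hn (.inl h)).symm, (cycleColour_ne h3 hn (.inr h)).symm]
  · exact colour_inl_ne_colour_inr a t
  · exact (colour_inl_ne_colour_inr b s).symm
  · rcases edgesNear_edge_inr hnear with h | h
    · obtain ⟨i, u⟩ := s
      obtain ⟨j, v⟩ := t
      obtain rfl : i = j := h
      obtain rfl : u = v := Fin.ext (by have := hp i; omega)
      exact absurd rfl hxy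
    · rcases (cycleGraph_adj_iff_eq_add_one hn).1 h with h | h
      · exact colour_inr_ne_of_eq_add_one h2 (hm _ s.2.pos (h ▸ t.2.pos)) h
      · exact (colour_inr_ne_of_eq_add_one h2 (hm _ t.2.pos (h ▸ s.2.pos)) h).symm

end pufferGraph

theorem sci_even_cycle_mod1_general (k : ℕ) (hmod : (2 * k) % 3 = 1)
    (p : Fin (2 * k) → ℕ) (hp : ∃ i, 1 ≤ p i)
    (hdeg : ∀ i : Fin (2 * k), sdeg (pufferGraph (2 * k) p) (Sum.inl i) ≤ 3) :
    sci (pufferGraph (2 * k) p) ≤ maxCycleDegSum (2 * k) p := by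
  have hn : 3 ≤ 2 * k := by omega
  have : NeZero (2 * k) := ⟨by omega⟩
  have hp_le (i : Fin (2 * k)) : p i ≤ 1 := by
    have := hdeg i
    rw [pufferGraph.sdeg_inl hn] at this
    omega
  have hmax (i : Fin (2 * k)) : 4 + p i + p (i + 1) ≤ maxCycleDegSum (2 * k) p := by
    have := pufferGraph.sdeg_add_sdeg_le_maxCycleDegSum (p := p)
      (cycleGraph_adj_add_one (by omega) i)
    rw [pufferGraph.sdeg_inl hn, pufferGraph.sdeg_inl hn] at this
    omega
  obtain ⟨i₀, hi₀⟩ := hp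
  refine sci_le_of_edgeSet_subset_range _ (pufferGraph.colour (2 * k) p (maxCycleDegSum (2 * k) p))
    (pufferGraph.edgeSet_subset_range_edge (by omega)) (pufferGraph.colour_lt ?_)
    (fun x y => pufferGraph.colour_ne hmod (by omega) hp_le ?_)
  · have := hmax i₀; omega
  · intro i hi hi'; have := hmax i; omega

/-- Let `G ≠ C_{2k}` be obtained from an even cycle `C_{2k}`, `2k ≥ 6`, `2k ≡ 1 (mod 3)`, by
attaching pendant edges at cycle vertices, with every cycle vertex of degree at most 3. Then the
strong chromatic index is at most `max_{uv ∈ E(C_{2k})} (d(u) + d(v))`. -/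
theorem sci_even_cycle_mod1 (k : ℕ) (hk : 3 ≤ k) (hmod : (2 * k) % 3 = 1)
    (p : Fin (2 * k) → ℕ) (hp : ∃ i, 1 ≤ p i)
    (hdeg : ∀ i : Fin (2 * k), sdeg (pufferGraph (2 * k) p) (Sum.inl i) ≤ 3) :
    sci (pufferGraph (2 * k) p) ≤ maxCycleDegSum (2 * k) p :=
  sci_even_cycle_mod1_general k hmod p hp hdeg
end
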